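/- arXiv:2003.05948 — 2 statements merged into one kernel-verified Lean document; each statement's English description precedes it below -/
import Mathlib

section
/- With the setup of the previous statement (H = Σ_{j=1}^m ε_{q_j} n_{q_j} + H̃, ε_{q_j} ≠ 0, h_j = (1 − sgn(ε_{q_j}))/2), the trial state ψ_t = (c†_{q_1})^{h_1} ⋯ (c†_{q_m})^{h_m} ψ̃, with ψ̃ a ground state of H̃ in its optimal M*-particle sector, is an eigenstate-candidate with particle number M** = M* + Σ_j h_j and energy ⟨ψ_t| H |ψ_t⟩ = Σ_j h_j ε_{q_j} + Ẽ_0(M*). Consequently E_0(M**) = Σ_j h_j ε_{q_j} + Ẽ_0(M*), and E_0(N) ≥ E_0(M**) for all N, i.e., the global ground state energy of H over all number sectors is attained in the sector with M** particles. -/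
open Finset ComplexConjugate

/-- Sign factor for fermionic operators in the occupation-number basis (subsets of modes). -/
noncomputable def fsign {K : Type*} [LinearOrder K] (k : K) (S : Finset K) : ℂ :=
  (-1 : ℂ) ^ (S.filter (fun j => j < k)).card

/-- Annihilation operator `c_k` on the fermionic Fock space over `ℂ^K`, realized as
functions `Finset K → ℂ` on the occupation-number basis. -/
noncomputable def annOp {K : Type*} [LinearOrder K] [Fintype K] (k : K) :
    Module.End ℂ (Finset K → ℂ) where
  toFun ψ := fun S => if k ∈ S then 0 else fsign k S * ψ (insert k S)
  map_add' ψ φ := by funext S; by_cases h : k ∈ S <;> simp [h, mul_add]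
  map_smul' a ψ := by funext S; by_cases h : k ∈ S <;> simp [h]; ring

/-- Creation operator `c†_k`. -/
noncomputable def crOp {K : Type*} [LinearOrder K] [Fintype K] (k : K) :
    Module.End ℂ (Finset K → ℂ) where
  toFun ψ := fun S => if k ∈ S then fsign k (S.erase k) * ψ (S.erase k) else 0
  map_add' ψ φ := by funext S; by_cases h : k ∈ S <;> simp [h, mul_add]
  map_smul' a ψ := by funext S; by_cases h : k ∈ S <;> simp [h]; ring

/-- Number operator `n_k = c†_k c_k`. -/
noncomputable def numOp {K : Type*} [LinearOrder K] [Fintype K] (k : K) :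
    Module.End ℂ (Finset K → ℂ) := crOp k * annOp k

/-- Total number operator `N = Σ_k n_k`. -/
noncomputable def ntotOp {K : Type*} [LinearOrder K] [Fintype K] :
    Module.End ℂ (Finset K → ℂ) where
  toFun ψ := fun S => (S.card : ℂ) * ψ S
  map_add' ψ φ := by funext S; simp [mul_add]
  map_smul' a ψ := by funext S; simp; ring

/-- Fermion parity operator `(−1)^N`. -/
noncomputable def parityOp {K : Type*} [LinearOrder K] [Fintype K] :
    Module.End ℂ (Finset K → ℂ) where
  toFun ψ := fun S => (-1 : ℂ) ^ S.card * ψ S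
  map_add' ψ φ := by funext S; simp [mul_add]
  map_smul' a ψ := by funext S; simp; ring

/-- Inner product on the Fock space. -/
noncomputable def finner {K : Type*} [LinearOrder K] [Fintype K] (φ ψ : Finset K → ℂ) : ℂ :=
  ∑ S : Finset K, conj (φ S) * ψ S

/-- Ordered product of creation operators `c†_{q_1} ⋯ c†_{q_r}` over a finite set of modes. -/
noncomputable def crProd {K : Type*} [LinearOrder K] [Fintype K] (T : Finset K) :
    Module.End ℂ (Finset K → ℂ) :=
  ((T.sort (· ≤ ·)).map crOp).prod

/-!
Filling the modes `q ∈ K0` with `ε_q < 0` on top of the `K0`-vacuum ground state `ψ̃` produces an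
eigenstate of `H` with energy `Σ_{ε_q<0} ε_q + Ẽ₀(M*)`, which lies in the sector `M**`.
Conversely, let `ψ` have a fixed particle number. Since `0 ≤ n_q ≤ 1`, the one-body part of `H`
contributes at least `Σ_{ε_q<0} ε_q ‖ψ‖²`. Because `H̃` commutes with every `n_q`, `q ∈ K0`,
it does not mix states with different occupation patterns `B ⊆ K0`. The annihilators of the
modes in `B` commute with `H̃`, and they carry the `B`-component of `ψ` isometrically into the
`K0`-vacuum. There the variational principle and the minimality of `M*` bound its `H̃`-energy below
by `Ẽ₀(M*)` times its squared norm.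
-/

theorem one_sub_sign_div_two_mul (x : ℝ) :
    (1 - Real.sign x) / 2 * x = if x < 0 then x else 0 := by
  rcases lt_trichotomy x 0 with hx | rfl | hx
  · simp [Real.sign_of_neg hx, hx]
  · simp
  · simp [Real.sign_of_pos hx, hx.not_gt]

section FockSpace

variable {K : Type*}

def ModeFilled (q : K) (ψ : Finset K → ℂ) : Prop := ∀ S, q ∉ S → ψ S = 0

def ModeEmpty (q : K) (ψ : Finset K → ℂ) : Prop := ∀ S, q ∈ S → ψ S = 0

def InSector (N : ℕ) (ψ : Finset K → ℂ) : Prop := ∀ S : Finset K, S.card ≠ N → ψ S = 0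

section Operators

variable [LinearOrder K]

def HasPattern (K0 B : Finset K) (ψ : Finset K → ℂ) : Prop := ∀ S, S ∩ K0 ≠ B → ψ S = 0

theorem hasPattern_iff {K0 B : Finset K} (hB : B ⊆ K0) {ψ : Finset K → ℂ} :
    HasPattern K0 B ψ ↔ ∀ q ∈ K0, (q ∈ B → ModeFilled q ψ) ∧ (q ∉ B → ModeEmpty q ψ) := by
  constructor
  · refine fun h q hq => ⟨fun hqB S hqS => h S ?_, fun hqB S hqS => h S ?_⟩
    · exact fun hSB => hqS (mem_of_mem_inter_left (hSB ▸ hqB))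
    · exact fun hSB => hqB (hSB ▸ mem_inter_of_mem hqS hq)
  · intro h S hSB
    obtain ⟨q, hq⟩ : ∃ q, ¬(q ∈ S ∩ K0 ↔ q ∈ B) := by
      by_contra! hc
      exact hSB (Finset.ext hc)
    by_cases hqB : q ∈ B
    · exact (h q (hB hqB)).1 hqB S fun hqS => hq (iff_of_true (mem_inter_of_mem hqS (hB hqB)) hqB)
    · have hqS : q ∈ S ∩ K0 := by tauto
      exact (h q (mem_inter.1 hqS).2).2 hqB S (mem_inter.1 hqS).1

theorem fsign_mul_self (k : K) (S : Finset K) : fsign k S * fsign k S = 1 := by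
  simp [fsign, ← mul_pow]

theorem fsign_ne_zero (k : K) (S : Finset K) : fsign k S ≠ 0 := by
  simp [fsign]

theorem conj_fsign (k : K) (S : Finset K) : conj (fsign k S) = fsign k S := by
  simp [fsign]

variable [Fintype K]

theorem annOp_apply (k : K) (ψ : Finset K → ℂ) (S : Finset K) :
    annOp k ψ S = if k ∈ S then 0 else fsign k S * ψ (insert k S) := rfl

theorem crOp_apply (k : K) (ψ : Finset K → ℂ) (S : Finset K) :
    crOp k ψ S = if k ∈ S then fsign k (S.erase k) * ψ (S.erase k) else 0 := rfl

theorem numOp_apply (q : K) (ψ : Finset K → ℂ) (S : Finset K) :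
    numOp q ψ S = if q ∈ S then ψ S else 0 := by
  change crOp q (annOp q ψ) S = _
  by_cases h : q ∈ S
  · simp [crOp_apply, annOp_apply, h, ← mul_assoc, fsign_mul_self]
  · simp [crOp_apply, h]

theorem numOp_eq_self_iff {q : K} {ψ : Finset K → ℂ} : numOp q ψ = ψ ↔ ModeFilled q ψ := by
  simp only [funext_iff, numOp_apply, ModeFilled]
  refine forall_congr' fun S => ?_
  by_cases hq : q ∈ S <;> simp [hq, eq_comm]

theorem numOp_eq_zero_iff {q : K} {ψ : Finset K → ℂ} : numOp q ψ = 0 ↔ ModeEmpty q ψ := by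
  simp only [funext_iff, numOp_apply, ModeEmpty, Pi.zero_apply]
  refine forall_congr' fun S => ?_
  by_cases hq : q ∈ S <;> simp [hq]

theorem annOp_eq_zero_iff {q : K} {ψ : Finset K → ℂ} : annOp q ψ = 0 ↔ ModeEmpty q ψ := by
  constructor
  · intro h S hq
    have h2 := congrFun h (S.erase q)
    simp only [annOp_apply, notMem_erase, if_false, insert_erase hq, Pi.zero_apply] at h2
    exact (mul_eq_zero.1 h2).resolve_left (fsign_ne_zero _ _)
  · intro h
    funext S
    by_cases hq : q ∈ S
    · simp [annOp_apply, hq]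
    · simp [annOp_apply, hq, h (insert q S) (mem_insert_self _ _)]

theorem ntotOp_eq_smul_iff {N : ℕ} {ψ : Finset K → ℂ} :
    ntotOp ψ = (N : ℂ) • ψ ↔ InSector N ψ := by
  simp only [funext_iff, InSector, Pi.smul_apply, smul_eq_mul]
  refine forall_congr' fun S => ?_
  change (S.card : ℂ) * ψ S = N * ψ S ↔ _
  rw [mul_eq_mul_right_iff, Nat.cast_inj, or_iff_not_imp_left]

theorem modeFilled_crOp_self (k : K) (ψ : Finset K → ℂ) : ModeFilled k (crOp k ψ) := by
  intro S hk
  simp [crOp_apply, hk]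

theorem ModeFilled.crOp {q : K} {ψ : Finset K → ℂ} (h : ModeFilled q ψ) (k : K) :
    ModeFilled q (crOp k ψ) := by
  intro S hq
  rw [crOp_apply]
  split_ifs
  · rw [h _ fun hq' => hq (mem_of_mem_erase hq'), mul_zero]
  · rfl

theorem ModeEmpty.crOp {q k : K} {ψ : Finset K → ℂ} (h : ModeEmpty q ψ) (hkq : k ≠ q) :
    ModeEmpty q (crOp k ψ) := by
  intro S hq
  rw [crOp_apply]
  split_ifs
  · rw [h _ (mem_erase.2 ⟨hkq.symm, hq⟩), mul_zero]
  · rfl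

theorem InSector.crOp {N : ℕ} {ψ : Finset K → ℂ} (h : InSector N ψ) (k : K) :
    InSector (N + 1) (crOp k ψ) := by
  intro S hS
  rw [crOp_apply]
  split_ifs with hk
  · rw [h _ fun h' => hS (by rw [← h', card_erase_add_one hk]), mul_zero]
  · rfl

theorem InSector.annOp {N : ℕ} {ψ : Finset K → ℂ} (h : InSector N ψ) (k : K) :
    InSector (N - 1) (annOp k ψ) := by
  intro S hS
  rw [annOp_apply]
  split_ifs with hk
  · rfl
  · rw [h _ fun h' => hS (by rw [← h', card_insert_of_notMem hk, Nat.add_sub_cancel]), mul_zero]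

theorem HasPattern.annOp {K0 B : Finset K} {k : K} (hk : k ∈ K0) {ψ : Finset K → ℂ}
    (h : HasPattern K0 B ψ) : HasPattern K0 (B.erase k) (annOp k ψ) := by
  intro S hS
  rw [annOp_apply]
  split_ifs with hkS
  · rfl
  · refine mul_eq_zero_of_right _ (h _ fun he => hS ?_)
    rw [← he, insert_inter_of_mem hk, erase_insert fun h' => hkS (mem_of_mem_inter_left h')]

theorem annOp_crOp_of_modeEmpty {k : K} {ψ : Finset K → ℂ} (h : ModeEmpty k ψ) :
    annOp k (crOp k ψ) = ψ := by
  funext S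
  by_cases hk : k ∈ S
  · simp [annOp_apply, hk, h S hk]
  · simp [annOp_apply, crOp_apply, hk, ← mul_assoc, fsign_mul_self]

end Operators

section Norm

variable [Fintype K]

noncomputable def fnormSq (ψ : Finset K → ℂ) : ℝ := ∑ S, Complex.normSq (ψ S)

theorem fnormSq_nonneg (ψ : Finset K → ℂ) : 0 ≤ fnormSq ψ :=
  sum_nonneg fun _ _ => Complex.normSq_nonneg _

theorem fnormSq_eq_zero {ψ : Finset K → ℂ} : fnormSq ψ = 0 ↔ ψ = 0 := by
  rw [fnormSq, sum_eq_zero_iff_of_nonneg fun S _ => Complex.normSq_nonneg _]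
  simp [funext_iff]

end Norm

section InnerProduct

variable [LinearOrder K] [Fintype K]

theorem finner_self (ψ : Finset K → ℂ) : finner ψ ψ = fnormSq ψ := by
  simp [finner, fnormSq, Complex.normSq_eq_conj_mul_self]

theorem finner_add_right (φ ψ χ : Finset K → ℂ) :
    finner φ (ψ + χ) = finner φ ψ + finner φ χ := by
  simp [finner, mul_add, sum_add_distrib]

theorem finner_smul_right (c : ℂ) (φ ψ : Finset K → ℂ) :
    finner φ (c • ψ) = c * finner φ ψ := by
  simp only [finner, Pi.smul_apply, smul_eq_mul, mul_sum]
  exact sum_congr rfl fun S _ => by ring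

theorem finner_smul_smul (c : ℂ) (φ ψ : Finset K → ℂ) :
    finner (c • φ) (c • ψ) = Complex.normSq c * finner φ ψ := by
  simp only [finner, Pi.smul_apply, smul_eq_mul, map_mul, mul_sum, Complex.normSq_eq_conj_mul_self]
  exact sum_congr rfl fun S _ => by ring

theorem finner_sum_right {ι : Type*} (s : Finset ι) (φ : Finset K → ℂ) (f : ι → Finset K → ℂ) :
    finner φ (∑ i ∈ s, f i) = ∑ i ∈ s, finner φ (f i) := by
  simp only [finner, Finset.sum_apply, mul_sum]
  exact sum_comm

theorem finner_crOp_left (k : K) (φ ψ : Finset K → ℂ) :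
    finner (crOp k φ) ψ = finner φ (annOp k ψ) := by
  let toggle : Finset K → Finset K := fun S => if k ∈ S then S.erase k else insert k S
  have htoggle : Function.Involutive toggle := fun S => by
    by_cases hk : k ∈ S <;> simp [toggle, hk]
  refine Fintype.sum_equiv (htoggle.toPerm _) _ _ fun S => ?_
  by_cases hk : k ∈ S
  · simp [toggle, hk, crOp_apply, annOp_apply, conj_fsign]
    ring
  · simp [toggle, hk, crOp_apply, annOp_apply]

theorem finner_crOp_crOp {k : K} {ψ : Finset K → ℂ} (h : ModeEmpty k ψ) :
    finner (crOp k ψ) (crOp k ψ) = finner ψ ψ := by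
  rw [finner_crOp_left, annOp_crOp_of_modeEmpty h]

theorem finner_annOp_annOp {k : K} {φ : Finset K → ℂ} (h : ModeFilled k φ) (ψ : Finset K → ℂ) :
    finner (annOp k φ) (annOp k ψ) = finner φ ψ := by
  rw [← finner_crOp_left]
  change finner (numOp k φ) ψ = _
  rw [numOp_eq_self_iff.2 h]

theorem finner_numOp_self (q : K) (ψ : Finset K → ℂ) :
    finner ψ (numOp q ψ) = ((∑ S with q ∈ S, Complex.normSq (ψ S) : ℝ) : ℂ) := by
  simp only [finner, numOp_apply, sum_filter, mul_ite, mul_zero]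
  push_cast
  exact sum_congr rfl fun S _ => by split_ifs <;> simp [Complex.normSq_eq_conj_mul_self]

theorem re_finner_numOp_self_le (q : K) (ψ : Finset K → ℂ) :
    0 ≤ (finner ψ (numOp q ψ)).re ∧ (finner ψ (numOp q ψ)).re ≤ fnormSq ψ := by
  rw [finner_numOp_self, Complex.ofReal_re]
  exact ⟨sum_nonneg fun S _ => Complex.normSq_nonneg _,
    sum_le_sum_of_subset_of_nonneg (filter_subset _ _) fun S _ _ => Complex.normSq_nonneg _⟩

theorem exists_le_re_finner (A : Module.End ℂ (Finset K → ℂ)) :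
    ∃ C : ℝ, ∀ ψ, finner ψ ψ = 1 → C ≤ (finner ψ (A ψ)).re := by
  have hA := A.continuous_of_finiteDimensional
  have hcont : Continuous fun ψ : Finset K → ℂ => (finner ψ (A ψ)).re := by
    unfold finner
    fun_prop
  have hsphere : IsCompact {ψ : Finset K → ℂ | finner ψ ψ = 1} := by
    refine Metric.isCompact_of_isClosed_isBounded
      (isClosed_eq (by unfold finner; fun_prop) continuous_const)
      ((Metric.isBounded_closedBall (x := 0) (r := 1)).subset fun ψ hψ => ?_)
    rw [Set.mem_ofPred_eq, finner_self, Complex.ofReal_eq_one] at hψ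
    rw [mem_closedBall_zero_iff, pi_norm_le_iff_of_nonneg zero_le_one]
    intro S
    have hS : Complex.normSq (ψ S) ≤ 1 :=
      hψ ▸ single_le_sum (fun S _ => Complex.normSq_nonneg (ψ S)) (mem_univ S)
    rw [Complex.normSq_eq_norm_sq] at hS
    nlinarith [norm_nonneg (ψ S)]
  obtain ⟨C, hC⟩ := (hsphere.image hcont).bddBelow
  exact ⟨C, fun ψ hψ => hC ⟨ψ, hψ, rfl⟩⟩

theorem re_finner_of_eq_smul {A : Module.End ℂ (Finset K → ℂ)} {ψ : Finset K → ℂ} {e : ℝ}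
    (hA : A ψ = (e : ℂ) • ψ) (hψ : finner ψ ψ = 1) : (finner ψ (A ψ)).re = e := by
  rw [hA, finner_smul_right, hψ, mul_one, Complex.ofReal_re]

/-- The variational principle, in homogeneous form. -/
theorem sInf_mul_fnormSq_le {A : Module.End ℂ (Finset K → ℂ)} {P : (Finset K → ℂ) → Prop}
    (hP : ∀ (c : ℂ) ψ, P ψ → P (c • ψ)) {ψ : Finset K → ℂ} (hψ : P ψ) :
    sInf {x | ∃ φ, finner φ φ = 1 ∧ P φ ∧ x = (finner φ (A φ)).re} * fnormSq ψ ≤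
      (finner ψ (A ψ)).re := by
  rcases (fnormSq_nonneg ψ).eq_or_lt with h0 | hpos
  · rw [← h0, mul_zero, fnormSq_eq_zero.1 h0.symm]
    simp [finner]
  obtain ⟨C, hC⟩ := exists_le_re_finner A
  set c : ℂ := (((√(fnormSq ψ))⁻¹ : ℝ) : ℂ)
  have hc : Complex.normSq c = (fnormSq ψ)⁻¹ := by
    rw [Complex.normSq_ofReal, ← mul_inv, Real.mul_self_sqrt hpos.le]
  have hnorm : finner (c • ψ) (c • ψ) = 1 := by
    rw [finner_smul_smul, finner_self, hc, ← Complex.ofReal_mul, inv_mul_cancel₀ hpos.ne',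
      Complex.ofReal_one]
  have hbdd : BddBelow {x | ∃ φ, finner φ φ = 1 ∧ P φ ∧ x = (finner φ (A φ)).re} :=
    ⟨C, by rintro _ ⟨φ, hφ, -, rfl⟩; exact hC φ hφ⟩
  have hscaled := csInf_le hbdd ⟨c • ψ, hnorm, hP c ψ hψ, rfl⟩
  rw [map_smul, finner_smul_smul, hc, Complex.re_ofReal_mul, le_inv_mul_iff₀ hpos] at hscaled
  linarith

end InnerProduct

section Patterns

variable [LinearOrder K]

noncomputable def patternPart (K0 B : Finset K) (ψ : Finset K → ℂ) : Finset K → ℂ :=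
  fun S => if S ∩ K0 = B then ψ S else 0

theorem hasPattern_patternPart (K0 B : Finset K) (ψ : Finset K → ℂ) :
    HasPattern K0 B (patternPart K0 B ψ) := by
  intro S hS
  simp [patternPart, hS]

theorem InSector.patternPart {N : ℕ} {ψ : Finset K → ℂ} (h : InSector N ψ) (K0 B : Finset K) :
    InSector N (patternPart K0 B ψ) := by
  intro S hS
  simp [_root_.patternPart, h S hS]

theorem sum_patternPart (K0 : Finset K) (ψ : Finset K → ℂ) :
    ∑ B ∈ K0.powerset, patternPart K0 B ψ = ψ := by
  funext S
  simp only [Finset.sum_apply, patternPart]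
  rw [sum_eq_single_of_mem (S ∩ K0) (mem_powerset.2 inter_subset_right)
    fun B _ hB => if_neg (Ne.symm hB)]
  simp

variable [Fintype K]

theorem finner_patternPart_left {K0 B : Finset K} (ψ : Finset K → ℂ) {X : Finset K → ℂ}
    (hX : HasPattern K0 B X) : finner (patternPart K0 B ψ) X = finner ψ X := by
  refine sum_congr rfl fun S _ => ?_
  by_cases h : S ∩ K0 = B
  · simp [patternPart, h]
  · simp [patternPart, h, hX S h]

theorem finner_eq_sum_patternPart {K0 : Finset K} {A : Module.End ℂ (Finset K → ℂ)}
    (hA : ∀ B ⊆ K0, ∀ φ, HasPattern K0 B φ → HasPattern K0 B (A φ)) (ψ : Finset K → ℂ) :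
    finner ψ (A ψ) =
      ∑ B ∈ K0.powerset, finner (patternPart K0 B ψ) (A (patternPart K0 B ψ)) := by
  calc finner ψ (A ψ) = finner ψ (A (∑ B ∈ K0.powerset, patternPart K0 B ψ)) := by
        rw [sum_patternPart]
    _ = ∑ B ∈ K0.powerset, finner ψ (A (patternPart K0 B ψ)) := by
        rw [map_sum, finner_sum_right]
    _ = _ := sum_congr rfl fun B hB => (finner_patternPart_left ψ
        (hA B (mem_powerset.1 hB) _ (hasPattern_patternPart K0 B ψ))).symm

theorem HasPattern.of_commute_numOp {K0 B : Finset K} (hB : B ⊆ K0)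
    {A : Module.End ℂ (Finset K → ℂ)} (hA : ∀ q ∈ K0, Commute A (numOp q))
    {ψ : Finset K → ℂ} (h : HasPattern K0 B ψ) : HasPattern K0 B (A ψ) := by
  rw [hasPattern_iff hB] at h ⊢
  intro q hq
  have hAq : numOp q (A ψ) = A (numOp q ψ) := (LinearMap.congr_fun (hA q hq) ψ).symm
  refine ⟨fun hqB => ?_, fun hqB => ?_⟩
  · rw [← numOp_eq_self_iff, hAq, numOp_eq_self_iff.2 ((h q hq).1 hqB)]
  · rw [← numOp_eq_zero_iff, hAq, numOp_eq_zero_iff.2 ((h q hq).2 hqB), map_zero]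

theorem fnormSq_annOp {k : K} {φ : Finset K → ℂ} (h : ModeFilled k φ) :
    fnormSq (annOp k φ) = fnormSq φ := by
  exact_mod_cast (finner_self _).symm.trans ((finner_annOp_annOp h φ).trans (finner_self φ))

/-- Annihilating the modes of `B` one at a time preserves the norm and the `A`-energy and ends in
the `K0`-vacuum. -/
theorem mul_fnormSq_le_of_hasPattern {K0 : Finset K} {A : Module.End ℂ (Finset K → ℂ)}
    (hA : ∀ q ∈ K0, Commute A (annOp q)) {E : ℝ}
    (hvac : ∀ M χ, (∀ q ∈ K0, annOp q χ = 0) → InSector M χ →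
      E * fnormSq χ ≤ (finner χ (A χ)).re)
    {B : Finset K} (hB : B ⊆ K0) {N : ℕ} {φ : Finset K → ℂ} (hφ : HasPattern K0 B φ)
    (hN : InSector N φ) : E * fnormSq φ ≤ (finner φ (A φ)).re := by
  induction B using Finset.induction_on generalizing N φ with
  | empty =>
    refine hvac N φ (fun q hq => annOp_eq_zero_iff.2 ?_) hN
    exact ((hasPattern_iff (empty_subset K0)).1 hφ q hq).2 (notMem_empty q)
  | insert k B hkB ih =>
    have hk : k ∈ K0 := hB (mem_insert_self k B)
    have hfilled : ModeFilled k φ := ((hasPattern_iff hB).1 hφ k hk).1 (mem_insert_self k B)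
    have hstripped := ih ((subset_insert k B).trans hB)
      (by simpa [erase_insert hkB] using hφ.annOp hk) (hN.annOp k)
    have hcomm : A (annOp k φ) = annOp k (A φ) := LinearMap.congr_fun (hA k hk) φ
    rwa [hcomm, finner_annOp_annOp hfilled, fnormSq_annOp hfilled] at hstripped

theorem mul_fnormSq_le_of_inSector {K0 : Finset K} {A : Module.End ℂ (Finset K → ℂ)}
    (hA : ∀ q ∈ K0, Commute A (annOp q) ∧ Commute A (crOp q)) {E : ℝ}
    (hvac : ∀ M χ, (∀ q ∈ K0, annOp q χ = 0) → InSector M χ →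
      E * fnormSq χ ≤ (finner χ (A χ)).re)
    {N : ℕ} {ψ : Finset K → ℂ} (hψ : InSector N ψ) : E * fnormSq ψ ≤ (finner ψ (A ψ)).re := by
  have hpres : ∀ B ⊆ K0, ∀ φ, HasPattern K0 B φ → HasPattern K0 B (A φ) :=
    fun B hB φ hφ => hφ.of_commute_numOp hB fun q hq => (hA q hq).2.mul_right (hA q hq).1
  have hnorm : fnormSq ψ = ∑ B ∈ K0.powerset, fnormSq (patternPart K0 B ψ) := by
    have := finner_eq_sum_patternPart (K0 := K0) (A := 1) (fun _ _ _ hφ => hφ) ψ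
    simp only [Module.End.one_apply, finner_self] at this
    exact_mod_cast this
  calc E * fnormSq ψ = ∑ B ∈ K0.powerset, E * fnormSq (patternPart K0 B ψ) := by
        rw [hnorm, mul_sum]
    _ ≤ ∑ B ∈ K0.powerset, (finner (patternPart K0 B ψ) (A (patternPart K0 B ψ))).re :=
        sum_le_sum fun B hB => mul_fnormSq_le_of_hasPattern (fun q hq => (hA q hq).1) hvac
          (mem_powerset.1 hB) (hasPattern_patternPart K0 B ψ) (hψ.patternPart K0 B)
    _ = (finner ψ (A ψ)).re := by rw [finner_eq_sum_patternPart hpres, Complex.re_sum]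

theorem InSector.le_card_sub {K0 : Finset K} {M : ℕ} {χ : Finset K → ℂ} (hM : InSector M χ)
    (hχ : χ ≠ 0) (hvac : ∀ q ∈ K0, ModeEmpty q χ) : M ≤ Fintype.card K - K0.card := by
  obtain ⟨S, hS⟩ := Function.ne_iff.1 hχ
  have hcard : S.card = M := by
    by_contra h
    exact hS (hM S h)
  rw [← hcard, ← card_compl]
  exact card_le_card fun q hqS => mem_compl.2 fun hq => hS (hvac q hq S hqS)

theorem groundEnergy_mul_fnormSq_le {K0 : Finset K} {Ht : Module.End ℂ (Finset K → ℂ)}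
    {Etil : ℕ → ℝ}
    (hEtil : ∀ M : ℕ, Etil M = sInf {x : ℝ | ∃ ψ : Finset K → ℂ,
      finner ψ ψ = 1 ∧ (∀ q ∈ K0, annOp q ψ = 0) ∧ ntotOp ψ = (M : ℂ) • ψ ∧
      x = (finner ψ (Ht ψ)).re})
    {Mstar : ℕ} (hMmin : ∀ M : ℕ, M ≤ Fintype.card K - K0.card → Etil Mstar ≤ Etil M)
    {M : ℕ} {χ : Finset K → ℂ} (hann : ∀ q ∈ K0, annOp q χ = 0) (hM : InSector M χ) :
    Etil Mstar * fnormSq χ ≤ (finner χ (Ht χ)).re := by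
  rcases eq_or_ne χ 0 with rfl | hχ
  · simp [fnormSq, finner]
  have hMle := hM.le_card_sub hχ fun q hq => annOp_eq_zero_iff.1 (hann q hq)
  have hvar : Etil M * fnormSq χ ≤ (finner χ (Ht χ)).re := by
    rw [hEtil M]
    simpa only [and_assoc] using sInf_mul_fnormSq_le (A := Ht)
      (P := fun φ => (∀ q ∈ K0, annOp q φ = 0) ∧ ntotOp φ = (M : ℂ) • φ)
      (fun c φ ⟨h1, h2⟩ => ⟨fun q hq => by rw [map_smul, h1 q hq, smul_zero],
        by rw [map_smul, h2, smul_comm]⟩)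
      ⟨hann, ntotOp_eq_smul_iff.2 hM⟩
  exact (mul_le_mul_of_nonneg_right (hMmin M hMle) (fnormSq_nonneg χ)).trans hvar

end Patterns

section Hamiltonian

variable [LinearOrder K] [Fintype K]

theorem modeFilled_prod_crOp {l : List K} {q : K} (hq : q ∈ l) (ψ : Finset K → ℂ) :
    ModeFilled q ((l.map crOp).prod ψ) := by
  induction l with
  | nil => simp at hq
  | cons k l ih =>
    rw [List.map_cons, List.prod_cons, Module.End.mul_apply]
    rcases List.mem_cons.1 hq with rfl | hq
    · exact modeFilled_crOp_self q _
    · exact (ih hq).crOp k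

theorem modeEmpty_prod_crOp {q : K} {ψ : Finset K → ℂ} (h : ModeEmpty q ψ) {l : List K}
    (hq : q ∉ l) : ModeEmpty q ((l.map crOp).prod ψ) := by
  induction l with
  | nil => simpa using h
  | cons k l ih =>
    rw [List.map_cons, List.prod_cons, Module.End.mul_apply]
    rw [List.mem_cons, not_or] at hq
    exact (ih hq.2).crOp (Ne.symm hq.1)

theorem inSector_prod_crOp {N : ℕ} {ψ : Finset K → ℂ} (h : InSector N ψ) (l : List K) :
    InSector (N + l.length) ((l.map crOp).prod ψ) := by
  induction l with
  | nil => simpa using h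
  | cons k l ih =>
    rw [List.map_cons, List.prod_cons, Module.End.mul_apply, List.length_cons, ← add_assoc]
    exact ih.crOp k

theorem finner_prod_crOp_self {l : List K} (hl : l.Nodup) {ψ : Finset K → ℂ}
    (h : ∀ q ∈ l, ModeEmpty q ψ) :
    finner ((l.map crOp).prod ψ) ((l.map crOp).prod ψ) = finner ψ ψ := by
  induction l with
  | nil => simp
  | cons k l ih =>
    obtain ⟨hkl, hl⟩ := List.nodup_cons.1 hl
    rw [List.map_cons, List.prod_cons, Module.End.mul_apply,
      finner_crOp_crOp (modeEmpty_prod_crOp (h k List.mem_cons_self) hkl),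
      ih hl fun q hq => h q (List.mem_cons_of_mem k hq)]

theorem sum_smul_numOp_apply {K0 T : Finset K} (hT : T ⊆ K0) (ε : K → ℝ) {ψ : Finset K → ℂ}
    (hfilled : ∀ q ∈ T, ModeFilled q ψ) (hempty : ∀ q ∈ K0, q ∉ T → ModeEmpty q ψ) :
    (∑ q ∈ K0, (ε q : ℂ) • numOp q) ψ = ((∑ q ∈ T, ε q : ℝ) : ℂ) • ψ := by
  rw [LinearMap.sum_apply, ← sum_subset hT fun q hq hqT => by
    rw [LinearMap.smul_apply, numOp_eq_zero_iff.2 (hempty q hq hqT), smul_zero],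
    Complex.ofReal_sum, sum_smul]
  exact sum_congr rfl fun q hq => by rw [LinearMap.smul_apply, numOp_eq_self_iff.2 (hfilled q hq)]

theorem finner_crProd_self {T : Finset K} {ψ : Finset K → ℂ} (h : ∀ q ∈ T, ModeEmpty q ψ) :
    finner (crProd T ψ) (crProd T ψ) = finner ψ ψ :=
  finner_prod_crOp_self (sort_nodup _ _) fun q hq => h q ((mem_sort _).1 hq)

theorem inSector_crProd {N : ℕ} {ψ : Finset K → ℂ} (h : InSector N ψ) (T : Finset K) :
    InSector (N + T.card) (crProd T ψ) := by
  simpa only [crProd, length_sort] using inSector_prod_crOp h (T.sort (· ≤ ·))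

theorem hamiltonian_crProd_eq_smul {K0 T : Finset K} (hT : T ⊆ K0) {ε : K → ℝ}
    {Ht H : Module.End ℂ (Finset K → ℂ)} (hH : H = (∑ q ∈ K0, (ε q : ℂ) • numOp q) + Ht)
    (hHt : ∀ q ∈ K0, Commute Ht (crOp q)) {ψ : Finset K → ℂ} (hψ : ∀ q ∈ K0, ModeEmpty q ψ)
    {e : ℝ} (he : Ht ψ = (e : ℂ) • ψ) :
    H (crProd T ψ) = ((∑ q ∈ T, ε q + e : ℝ) : ℂ) • crProd T ψ := by
  have hsort : ∀ {q}, q ∈ T.sort (· ≤ ·) ↔ q ∈ T := mem_sort _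
  have hone_body := sum_smul_numOp_apply hT ε (ψ := crProd T ψ)
    (fun q hq => modeFilled_prod_crOp (hsort.2 hq) ψ)
    (fun q hq hqT => modeEmpty_prod_crOp (hψ q hq) (mt hsort.1 hqT))
  have hcomm : Commute Ht (crProd T) := Commute.list_prod_right _ _ <| by
    simpa only [List.forall_mem_map] using fun q hq => hHt q (hT (hsort.1 hq))
  have hHt_eigen : Ht (crProd T ψ) = (e : ℂ) • crProd T ψ := by
    rw [← Module.End.mul_apply, hcomm.eq, Module.End.mul_apply, he, map_smul]
  rw [hH, LinearMap.add_apply, hone_body, hHt_eigen, ← add_smul, Complex.ofReal_add]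

theorem exists_normalized_inSector {N : ℕ} (hN : N ≤ Fintype.card K) :
    ∃ ψ : Finset K → ℂ, finner ψ ψ = 1 ∧ ntotOp ψ = (N : ℂ) • ψ := by
  obtain ⟨S0, -, hS0⟩ :=
    exists_subset_card_eq (s := (univ : Finset K)) (n := N) (by rwa [card_univ])
  refine ⟨Pi.single S0 1, ?_, ntotOp_eq_smul_iff.2 fun S hS => ?_⟩
  · simp [finner, Pi.single_apply]
  · rw [Pi.single_apply, if_neg (by rintro rfl; exact hS hS0)]

theorem sum_filter_neg_mul_fnormSq_le (K0 : Finset K) (ε : K → ℝ) (ψ : Finset K → ℂ) :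
    (∑ q ∈ K0.filter (fun q => ε q < 0), ε q) * fnormSq ψ ≤
      (finner ψ ((∑ q ∈ K0, (ε q : ℂ) • numOp q) ψ)).re := by
  rw [LinearMap.sum_apply, finner_sum_right, Complex.re_sum, sum_filter, sum_mul]
  refine sum_le_sum fun q _ => ?_
  rw [LinearMap.smul_apply, finner_smul_right, Complex.re_ofReal_mul]
  obtain ⟨h0, h1⟩ := re_finner_numOp_self_le q ψ
  split_ifs <;> nlinarith [fnormSq_nonneg ψ]

theorem le_re_finner_hamiltonian {K0 : Finset K} {ε : K → ℝ}
    {Ht H : Module.End ℂ (Finset K → ℂ)} (hH : H = (∑ q ∈ K0, (ε q : ℂ) • numOp q) + Ht)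
    (hHt : ∀ q ∈ K0, Commute Ht (annOp q) ∧ Commute Ht (crOp q)) {E : ℝ}
    (hvac : ∀ M χ, (∀ q ∈ K0, annOp q χ = 0) → InSector M χ →
      E * fnormSq χ ≤ (finner χ (Ht χ)).re)
    {N : ℕ} {ψ : Finset K → ℂ} (hnorm : finner ψ ψ = 1) (hN : ntotOp ψ = (N : ℂ) • ψ) :
    (∑ q ∈ K0.filter (fun q => ε q < 0), ε q) + E ≤ (finner ψ (H ψ)).re := by
  have hone_body := sum_filter_neg_mul_fnormSq_le K0 ε ψ
  have hHt_bound := mul_fnormSq_le_of_inSector hHt hvac (ntotOp_eq_smul_iff.1 hN)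
  rw [finner_self, Complex.ofReal_eq_one] at hnorm
  rw [hnorm, mul_one] at hone_body hHt_bound
  rw [hH, LinearMap.add_apply, finner_add_right, Complex.add_re]
  linarith

end Hamiltonian

end FockSpace

theorem stmt9_general {K : Type*} [LinearOrder K] [Fintype K]
    (K0 : Finset K) (ε : K → ℝ)
    (Ht H : Module.End ℂ (Finset K → ℂ))
    (hH : H = (∑ q ∈ K0, (ε q : ℂ) • numOp q) + Ht)
    (hHtSupp : ∀ q ∈ K0, Ht * annOp q = annOp q * Ht ∧ Ht * crOp q = crOp q * Ht)
    (Esec : ℕ → ℝ)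
    (hEsec : ∀ N : ℕ, Esec N = sInf {x : ℝ | ∃ ψ : Finset K → ℂ,
      finner ψ ψ = 1 ∧ ntotOp ψ = (N : ℂ) • ψ ∧ x = (finner ψ (H ψ)).re})
    (Etil : ℕ → ℝ)
    (hEtil : ∀ M : ℕ, Etil M = sInf {x : ℝ | ∃ ψ : Finset K → ℂ,
      finner ψ ψ = 1 ∧ (∀ q ∈ K0, annOp q ψ = 0) ∧ ntotOp ψ = (M : ℂ) • ψ ∧
      x = (finner ψ (Ht ψ)).re})
    (Mstar : ℕ)
    (hMmin : ∀ M : ℕ, M ≤ Fintype.card K - K0.card → Etil Mstar ≤ Etil M)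
    (h : K → ℝ) (hhh : ∀ q, h q = (1 - Real.sign (ε q)) / 2)
    (tψ : Finset K → ℂ) (htnorm : finner tψ tψ = 1)
    (htann : ∀ q ∈ K0, annOp q tψ = 0)
    (htsec : ntotOp tψ = (Mstar : ℂ) • tψ)
    (htgs : Ht tψ = ((Etil Mstar : ℝ) : ℂ) • tψ)
    (ψt : Finset K → ℂ) (hψt : ψt = crProd (K0.filter (fun q => ε q < 0)) tψ)
    (Mss : ℕ) (hMss : Mss = Mstar + (K0.filter (fun q => ε q < 0)).card) :
    finner ψt ψt = 1 ∧
    ntotOp ψt = (Mss : ℂ) • ψt ∧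
    (finner ψt (H ψt)).re = (∑ q ∈ K0, h q * ε q) + Etil Mstar ∧
    Esec Mss = (∑ q ∈ K0, h q * ε q) + Etil Mstar ∧
    (∀ N : ℕ, N ≤ Fintype.card K → Esec Mss ≤ Esec N) := by
  set T := K0.filter (fun q => ε q < 0)
  have hsum_h : ∑ q ∈ K0, h q * ε q = ∑ q ∈ T, ε q := by
    simp only [hhh, one_sub_sign_div_two_mul, T, sum_filter]
  have hlower : ∀ N : ℕ, (∑ q ∈ T, ε q) + Etil Mstar ∈ lowerBounds {x : ℝ | ∃ ψ : Finset K → ℂ,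
      finner ψ ψ = 1 ∧ ntotOp ψ = (N : ℂ) • ψ ∧ x = (finner ψ (H ψ)).re} := by
    rintro N _ ⟨ψ, hnorm, hN, rfl⟩
    exact le_re_finner_hamiltonian hH hHtSupp
      (fun _ _ => groundEnergy_mul_fnormSq_le hEtil hMmin) hnorm hN
  have htEmpty : ∀ q ∈ K0, ModeEmpty q tψ := fun q hq => annOp_eq_zero_iff.1 (htann q hq)
  have hψt_norm : finner ψt ψt = 1 := by
    rw [hψt, finner_crProd_self fun q hq => htEmpty q (filter_subset _ _ hq), htnorm]
  have hψt_sec : ntotOp ψt = (Mss : ℂ) • ψt := by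
    rw [ntotOp_eq_smul_iff, hψt, hMss]
    exact inSector_crProd (ntotOp_eq_smul_iff.1 htsec) T
  have hψt_energy : (finner ψt (H ψt)).re = (∑ q ∈ T, ε q) + Etil Mstar := by
    refine re_finner_of_eq_smul ?_ hψt_norm
    rw [hψt]
    exact hamiltonian_crProd_eq_smul (filter_subset _ _) hH (fun q hq => (hHtSupp q hq).2)
      htEmpty htgs
  have hEsec_Mss : Esec Mss = (∑ q ∈ T, ε q) + Etil Mstar := by
    rw [hEsec]
    exact IsLeast.csInf_eq ⟨⟨ψt, hψt_norm, hψt_sec, hψt_energy.symm⟩, hlower Mss⟩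
  refine ⟨hψt_norm, hψt_sec, hsum_h ▸ hψt_energy, hsum_h ▸ hEsec_Mss, fun N hN => ?_⟩
  obtain ⟨ψ0, hψ0_norm, hψ0_sec⟩ := exists_normalized_inSector hN
  rw [hEsec_Mss, hEsec]
  exact le_csInf ⟨_, ψ0, hψ0_norm, hψ0_sec, rfl⟩ (hlower N)

/-- with `H = Σ_{q∈K₀} ε_q n_q + H̃` as before, the trial state
`ψ_t = Π_{q∈K₀, ε_q<0} c†_q |ψ̃⟩`, with `ψ̃` a ground state of `H̃` in its optimal `M*`-particle
sector, is a normalized state of particle number `M** = M* + Σ_q h_q` and energy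
`Σ_q h_q ε_q + Ẽ₀(M*)`; consequently `E₀(M**) = Σ_q h_q ε_q + Ẽ₀(M*)` and
`E₀(N) ≥ E₀(M**)` for all `N`. -/
theorem stmt9 {K : Type*} [LinearOrder K] [Fintype K]
    (K0 : Finset K) (ε : K → ℝ) (hε : ∀ q ∈ K0, ε q ≠ 0)
    (Ht H : Module.End ℂ (Finset K → ℂ))
    (hH : H = (∑ q ∈ K0, (ε q : ℂ) • numOp q) + Ht)
    (hHtSupp : ∀ q ∈ K0, Ht * annOp q = annOp q * Ht ∧ Ht * crOp q = crOp q * Ht)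
    (hHerm : ∀ φ ψ : Finset K → ℂ, finner (Ht φ) ψ = finner φ (Ht ψ))
    (hNum : Ht * ntotOp = ntotOp * Ht)
    (Esec : ℕ → ℝ)
    (hEsec : ∀ N : ℕ, Esec N = sInf {x : ℝ | ∃ ψ : Finset K → ℂ,
      finner ψ ψ = 1 ∧ ntotOp ψ = (N : ℂ) • ψ ∧ x = (finner ψ (H ψ)).re})
    (Etil : ℕ → ℝ)
    (hEtil : ∀ M : ℕ, Etil M = sInf {x : ℝ | ∃ ψ : Finset K → ℂ,
      finner ψ ψ = 1 ∧ (∀ q ∈ K0, annOp q ψ = 0) ∧ ntotOp ψ = (M : ℂ) • ψ ∧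
      x = (finner ψ (Ht ψ)).re})
    (Mstar : ℕ) (hMle : Mstar ≤ Fintype.card K - K0.card)
    (hMmin : ∀ M : ℕ, M ≤ Fintype.card K - K0.card → Etil Mstar ≤ Etil M)
    (h : K → ℝ) (hhh : ∀ q, h q = (1 - Real.sign (ε q)) / 2)
    (tψ : Finset K → ℂ) (htnorm : finner tψ tψ = 1)
    (htann : ∀ q ∈ K0, annOp q tψ = 0)
    (htsec : ntotOp tψ = (Mstar : ℂ) • tψ)
    (htgs : Ht tψ = ((Etil Mstar : ℝ) : ℂ) • tψ)
    (ψt : Finset K → ℂ) (hψt : ψt = crProd (K0.filter (fun q => ε q < 0)) tψ)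
    (Mss : ℕ) (hMss : Mss = Mstar + (K0.filter (fun q => ε q < 0)).card) :
    finner ψt ψt = 1 ∧
    ntotOp ψt = (Mss : ℂ) • ψt ∧
    (finner ψt (H ψt)).re = (∑ q ∈ K0, h q * ε q) + Etil Mstar ∧
    Esec Mss = (∑ q ∈ K0, h q * ε q) + Etil Mstar ∧
    (∀ N : ℕ, N ≤ Fintype.card K → Esec Mss ≤ Esec N) :=
  stmt9_general K0 ε Ht H hH hHtSupp Esec hEsec Etil hEtil Mstar hMmin h hhh tψ htnorm htann htsec
    htgs ψt hψt Mss hMss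
end

section
/- Let H₀ and H₁ be Hermitian operators on a finite-dimensional Hilbert space, both commuting with a fixed unitary involution P (fermion parity), and set H_s = (1−s)H₀ + sH₁ for s ∈ [0,1]. Suppose that for every s ∈ [0,1], H_s has a nonzero parity gap: its ground state eigenspace lies entirely in one P-eigenspace and the lowest energy in the opposite P-eigenspace is strictly larger. Then the ground state parity eigenvalue of H_s is constant in s; in particular H₁ has the same ground state parity as H₀. -/
/-!
Each parity-block ground energy is an infimum of the expectation `Re ⟪ψ, H_s ψ⟫` over the unit
vectors of that block, a compact set on which the expectation is jointly continuous in `(s, ψ)`;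
hence `E₊` and `E₋` are continuous in `s`. If the lower block changed between two times, the
intermediate value theorem would produce an `s ∈ [0,1]` with `E₊(s) = E₋(s)`, closing the gap.
-/

open Matrix

section

variable {ι : Type*} [Fintype ι]

theorem Matrix.dotProduct_star_self_eq_sum_norm_sq (ψ : ι → ℂ) :
    star ψ ⬝ᵥ ψ = ((∑ i, ‖ψ i‖ ^ 2 : ℝ) : ℂ) := by
  push_cast
  simp [dotProduct, RCLike.star_def, ← Complex.conj_mul']

theorem norm_apply_le_one_of_dotProduct_star_self_eq_one {ψ : ι → ℂ}
    (hψ : star ψ ⬝ᵥ ψ = 1) (i : ι) : ‖ψ i‖ ≤ 1 := by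
  have hsum : ∑ j, ‖ψ j‖ ^ 2 = 1 := by
    exact_mod_cast (dotProduct_star_self_eq_sum_norm_sq ψ).symm.trans hψ
  have hi : ‖ψ i‖ ^ 2 ≤ 1 :=
    hsum ▸ Finset.single_le_sum (fun j _ => sq_nonneg ‖ψ j‖) (Finset.mem_univ i)
  exact (sq_le_one_iff₀ (norm_nonneg _)).1 hi

theorem isCompact_setOf_dotProduct_star_self_eq_one :
    IsCompact {ψ : ι → ℂ | star ψ ⬝ᵥ ψ = 1} := by
  refine Metric.isCompact_of_isClosed_isBounded ?_ ?_
  · exact isClosed_eq (continuous_star.dotProduct continuous_id) continuous_const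
  · refine (Metric.isBounded_closedBall (x := 0) (r := 1)).subset fun ψ hψ => ?_
    rw [mem_closedBall_zero_iff, pi_norm_le_iff_of_nonneg zero_le_one]
    exact norm_apply_le_one_of_dotProduct_star_self_eq_one hψ

theorem continuous_sInf_re_star_dotProduct_mulVec {X : Type*} [TopologicalSpace X]
    {H : X → Matrix ι ι ℂ} (hH : Continuous H) {C : (ι → ℂ) → Prop}
    (hC : IsClosed {ψ | C ψ}) :
    Continuous fun s => sInf {x : ℝ | ∃ ψ : ι → ℂ,
      star ψ ⬝ᵥ ψ = 1 ∧ C ψ ∧ x = (star ψ ⬝ᵥ H s *ᵥ ψ).re} := by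
  have hK : IsCompact {ψ : ι → ℂ | star ψ ⬝ᵥ ψ = 1 ∧ C ψ} :=
    isCompact_setOf_dotProduct_star_self_eq_one.inter_right hC
  have hf : Continuous fun p : X × (ι → ℂ) => (star p.2 ⬝ᵥ H p.1 *ᵥ p.2).re :=
    Complex.continuous_re.comp <| (continuous_star.comp continuous_snd).dotProduct <|
      (hH.comp continuous_fst).matrix_mulVec continuous_snd
  refine (hK.continuous_sInf (f := fun s ψ => (star ψ ⬝ᵥ H s *ᵥ ψ).re) hf).congr fun s => ?_
  congr 1
  ext x
  simp only [Set.mem_image, Set.mem_ofPred_eq, and_assoc, eq_comm (a := x)]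

end

theorem IsPreconnected.lt_iff_lt_of_forall_ne {X α : Type*} [TopologicalSpace X] [LinearOrder α]
    [TopologicalSpace α] [OrderClosedTopology α] {s : Set X} (hs : IsPreconnected s)
    {f g : X → α} (hf : ContinuousOn f s) (hg : ContinuousOn g s) (hne : ∀ x ∈ s, f x ≠ g x)
    {a b : X} (ha : a ∈ s) (hb : b ∈ s) : f a < g a ↔ f b < g b := by
  suffices key : ∀ a ∈ s, ∀ b ∈ s, f a < g a → f b < g b from ⟨key a ha b hb, key b hb a ha⟩
  intro a ha b hb hab
  by_contra! hba
  obtain ⟨x, hx, hfg⟩ := hs.intermediate_value₂ ha hb hf hg hab.le hba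
  exact hne x hx hfg

theorem stmt16_general {n : ℕ} (H0 H1 P : Matrix (Fin n) (Fin n) ℂ)
    (Hs : ℝ → Matrix (Fin n) (Fin n) ℂ)
    (hHs : ∀ s : ℝ, Hs s = (1 - (s : ℂ)) • H0 + (s : ℂ) • H1)
    (Ep Em : ℝ → ℝ)
    (hEp : ∀ s : ℝ, Ep s = sInf {x : ℝ | ∃ ψ : Fin n → ℂ,
      star ψ ⬝ᵥ ψ = 1 ∧ P.mulVec ψ = ψ ∧ x = (star ψ ⬝ᵥ (Hs s).mulVec ψ).re})
    (hEm : ∀ s : ℝ, Em s = sInf {x : ℝ | ∃ ψ : Fin n → ℂ,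
      star ψ ⬝ᵥ ψ = 1 ∧ P.mulVec ψ = -ψ ∧ x = (star ψ ⬝ᵥ (Hs s).mulVec ψ).re})
    (hgap : ∀ s ∈ Set.Icc (0 : ℝ) 1, Ep s ≠ Em s) :
    ∀ s ∈ Set.Icc (0 : ℝ) 1, ∀ t ∈ Set.Icc (0 : ℝ) 1, (Ep s < Em s ↔ Ep t < Em t) := by
  have hHc : Continuous Hs := by
    rw [funext hHs]
    fun_prop
  have hPc : Continuous fun ψ : Fin n → ℂ => P *ᵥ ψ := continuous_const.matrix_mulVec continuous_id
  have hEpc : Continuous Ep := funext hEp ▸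
    continuous_sInf_re_star_dotProduct_mulVec hHc (isClosed_eq hPc continuous_id)
  have hEmc : Continuous Em := funext hEm ▸
    continuous_sInf_re_star_dotProduct_mulVec hHc (isClosed_eq hPc continuous_neg)
  intro s hs t ht
  exact isPreconnected_Icc.lt_iff_lt_of_forall_ne hEpc.continuousOn hEmc.continuousOn hgap hs ht

/-- for the family `H_s = (1−s)H₀ + sH₁` of Hermitian operators commuting with a
unitary involution `P` (fermion parity), if the lowest energies `E₊(s), E₋(s)` of the two parity
blocks satisfy `E₊(s) ≠ E₋(s)` for all `s ∈ [0,1]` (nonzero parity gap), then the ground state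
parity (which block is lower) is constant on `[0,1]`. -/
theorem stmt16 {n : ℕ} (H0 H1 P : Matrix (Fin n) (Fin n) ℂ)
    (hH0 : H0.IsHermitian) (hH1 : H1.IsHermitian)
    (hPunit : P * Pᴴ = 1) (hPinv : P * P = 1)
    (hPH0 : P * H0 = H0 * P) (hPH1 : P * H1 = H1 * P)
    (Hs : ℝ → Matrix (Fin n) (Fin n) ℂ)
    (hHs : ∀ s : ℝ, Hs s = (1 - (s : ℂ)) • H0 + (s : ℂ) • H1)
    (Ep Em : ℝ → ℝ)
    (hEp : ∀ s : ℝ, Ep s = sInf {x : ℝ | ∃ ψ : Fin n → ℂ,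
      star ψ ⬝ᵥ ψ = 1 ∧ P.mulVec ψ = ψ ∧ x = (star ψ ⬝ᵥ (Hs s).mulVec ψ).re})
    (hEm : ∀ s : ℝ, Em s = sInf {x : ℝ | ∃ ψ : Fin n → ℂ,
      star ψ ⬝ᵥ ψ = 1 ∧ P.mulVec ψ = -ψ ∧ x = (star ψ ⬝ᵥ (Hs s).mulVec ψ).re})
    (hgap : ∀ s ∈ Set.Icc (0 : ℝ) 1, Ep s ≠ Em s) :
    ∀ s ∈ Set.Icc (0 : ℝ) 1, ∀ t ∈ Set.Icc (0 : ℝ) 1, (Ep s < Em s ↔ Ep t < Em t) :=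
  stmt16_general H0 H1 P Hs hHs Ep Em hEp hEm hgap
end
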